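/- arXiv:1511.05503 — 4 statements merged into one kernel-verified Lean document; each statement's English description precedes it below -/
import Mathlib

section
/- Let p be an odd prime and i an integer with 1 ≤ i ≤ p-3. Then ∑_{t=2}^{p-1} 1/(t^i(1-t)) ≡ -(i+1) (mod p), where the arithmetic is in ℤ/pℤ. -/
/-!
For `x ≠ 0, 1` partial fractions give
`1 / (x ^ i (1 - x)) = x⁻¹ + x⁻² + ⋯ + x⁻ⁱ + 1 / (1 - x)`.
Summed over `x ∈ 𝔽_q \ {0, 1}`, each `x⁻ʲ` contributes `∑ₓ xʲ - 0 - 1 = -1` (the full power sum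
vanishes for `0 < j < q - 1`), and `x ↦ 1 - x` permutes `𝔽_q \ {0, 1}`, so the last term
contributes `∑ x⁻¹ = -1` as well. Over `ℤ/pℤ` the residues `2, …, p - 1` are exactly `𝔽_p \ {0, 1}`.
-/

open Finset

theorem inv_pow_mul_one_sub_eq_sum {K : Type*} [Field K] {x : K} (hx₀ : x ≠ 0) (hx₁ : x ≠ 1)
    (i : ℕ) : (x ^ i * (1 - x))⁻¹ = ∑ j ∈ range i, x⁻¹ ^ (j + 1) + (1 - x)⁻¹ := by
  have hsplit : x⁻¹ * (1 - x)⁻¹ = x⁻¹ + (1 - x)⁻¹ := by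
    field_simp [sub_ne_zero.2 hx₁.symm]
    ring
  induction i with
  | zero => simp
  | succ n ih =>
    rw [pow_succ', mul_assoc, mul_inv, ih, mul_add, mul_sum, sum_range_succ']
    simp only [← pow_succ']
    linear_combination hsplit

namespace FiniteField

variable {F : Type*} [Field F] [Fintype F] [DecidableEq F]

theorem sum_compl_zero_one {M : Type*} [AddCommGroup M] (g : F → M) :
    ∑ x ∈ ({0, 1} : Finset F)ᶜ, g x = ∑ x, g x - g 0 - g 1 := by
  rw [← sum_compl_add_sum {0, 1}, sum_pair zero_ne_one]
  abel

theorem sum_compl_zero_one_inv_pow {k : ℕ} (hk₀ : k ≠ 0) (hk : k < Fintype.card F - 1) :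
    ∑ x ∈ ({0, 1} : Finset F)ᶜ, x⁻¹ ^ k = -1 := by
  rw [sum_compl_zero_one, Fintype.sum_equiv (Equiv.inv F) (fun x => x⁻¹ ^ k) (· ^ k) fun _ => rfl,
    sum_pow_lt_card_sub_one F k hk]
  simp [hk₀]

theorem sum_compl_zero_one_inv_one_sub :
    ∑ x ∈ ({0, 1} : Finset F)ᶜ, (1 - x)⁻¹ = ∑ x ∈ ({0, 1} : Finset F)ᶜ, x⁻¹ := by
  rw [sum_compl_zero_one, sum_compl_zero_one,
    Fintype.sum_equiv (Equiv.subLeft 1) (fun x => (1 - x)⁻¹) (·⁻¹) fun _ => rfl]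
  simp

theorem sum_compl_zero_one_inv_pow_mul_one_sub (hq : 2 < Fintype.card F) {i : ℕ}
    (hi : i + 2 ≤ Fintype.card F) :
    ∑ x ∈ ({0, 1} : Finset F)ᶜ, (x ^ i * (1 - x))⁻¹ = -(i + 1) := by
  have hpow : ∀ j ∈ range i, ∑ x ∈ ({0, 1} : Finset F)ᶜ, x⁻¹ ^ (j + 1) = -1 := fun j hj =>
    sum_compl_zero_one_inv_pow j.succ_ne_zero (by rw [mem_range] at hj; omega)
  have hone_sub : ∑ x ∈ ({0, 1} : Finset F)ᶜ, (1 - x)⁻¹ = -1 := by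
    rw [sum_compl_zero_one_inv_one_sub]
    simpa using sum_compl_zero_one_inv_pow (F := F) one_ne_zero (by omega)
  calc ∑ x ∈ ({0, 1} : Finset F)ᶜ, (x ^ i * (1 - x))⁻¹
      = ∑ x ∈ ({0, 1} : Finset F)ᶜ, (∑ j ∈ range i, x⁻¹ ^ (j + 1) + (1 - x)⁻¹) :=
        sum_congr rfl fun x hx => by
          simp only [mem_compl, mem_insert, mem_singleton, not_or] at hx
          exact inv_pow_mul_one_sub_eq_sum hx.1 hx.2 i
    _ = ∑ j ∈ range i, ∑ x ∈ ({0, 1} : Finset F)ᶜ, x⁻¹ ^ (j + 1)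
          + ∑ x ∈ ({0, 1} : Finset F)ᶜ, (1 - x)⁻¹ := by
        rw [sum_add_distrib, sum_comm]
    _ = -(i + 1) := by
        rw [sum_congr rfl hpow, hone_sub, sum_const, card_range, nsmul_eq_mul]
        ring

end FiniteField

theorem ZMod.sum_Icc_two_sub_one {p : ℕ} [NeZero p] {M : Type*} [AddCommMonoid M]
    (f : ZMod p → M) :
    ∑ t ∈ Icc 2 (p - 1), f t = ∑ x ∈ ({0, 1} : Finset (ZMod p))ᶜ, f x := by
  refine sum_nbij' (↑) ZMod.val ?_ ?_ ?_ ?_ fun _ _ => rfl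
  · intro t ht
    obtain ⟨h2, hp⟩ := mem_Icc.1 ht
    have hval : (t : ZMod p).val = t := ZMod.val_cast_of_lt (by omega)
    simp only [mem_compl, mem_insert, mem_singleton, not_or]
    constructor <;> intro h <;> rw [h] at hval
    · rw [ZMod.val_zero] at hval; omega
    · rw [ZMod.val_one_eq_one_mod, Nat.mod_eq_of_lt (by omega)] at hval; omega
  · intro x hx
    simp only [mem_compl, mem_insert, mem_singleton, not_or] at hx
    have h0 : x.val ≠ 0 := (ZMod.val_ne_zero x).2 hx.1
    have h1 : x.val ≠ 1 := fun h => hx.2 (by rw [← ZMod.natCast_zmod_val x, h, Nat.cast_one])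
    have := ZMod.val_lt x
    exact mem_Icc.2 ⟨by omega, by omega⟩
  · intro t ht
    exact ZMod.val_cast_of_lt (by rw [mem_Icc] at ht; omega)
  · intro x _
    exact ZMod.natCast_zmod_val x

theorem sum_inv_pow_mul_one_sub_general (p : ℕ) (hp : p.Prime) (hodd : Odd p) (i : ℕ)
    (hi2 : i ≤ p - 3) :
    ∑ t ∈ Finset.Icc 2 (p - 1), ((t : ZMod p) ^ i * (1 - (t : ZMod p)))⁻¹ = -(i + 1) := by
  have : Fact p.Prime := ⟨hp⟩
  have hp2 : 2 < p := by
    obtain ⟨m, rfl⟩ := hodd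
    have := hp.two_le
    omega
  rw [ZMod.sum_Icc_two_sub_one fun x => (x ^ i * (1 - x))⁻¹]
  exact FiniteField.sum_compl_zero_one_inv_pow_mul_one_sub (by rwa [ZMod.card])
    (by rw [ZMod.card]; omega)

theorem sum_inv_pow_mul_one_sub (p : ℕ) (hp : p.Prime) (hodd : Odd p) (i : ℕ)
    (hi1 : 1 ≤ i) (hi2 : i ≤ p - 3) :
    ∑ t ∈ Finset.Icc 2 (p - 1), ((t : ZMod p) ^ i * (1 - (t : ZMod p)))⁻¹ = -(i + 1) :=
  sum_inv_pow_mul_one_sub_general p hp hodd i hi2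
end

section
/- Let p be an odd prime, i an integer with 1 ≤ i ≤ p-3, and m ∈ (ℤ/pℤ)^×. Then ∑_{k} (1/k^i)·(1/(m-k)) ≡ -(i+1)/m^{i+1} (mod p), where the sum is over all k ∈ (ℤ/pℤ)^× with k ≠ m. -/
/-!
Over a finite field `K`, the power sums `∑ₓ x⁻ʲ` vanish for `j < |K| - 1`, so removing the terms at
`0` and `m` leaves `-m⁻ʲ`. The partial fraction identity
`1 / (kⁿ⁺¹ (m - k)) = m⁻¹ (1 / kⁿ⁺¹ + 1 / (kⁿ (m - k)))` then gives a recursion in `n` whose solution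
is `-(n + 1) / mⁿ⁺¹`, starting from `∑ₖ 1 / (m - k) = -1 / m`.
-/

open Finset

theorem Finset.sum_filter_ne_and_ne {α M : Type*} [Fintype α] [DecidableEq α] [AddCommGroup M]
    {a b : α} (hab : a ≠ b) (f : α → M) :
    ∑ k ∈ univ.filter (fun k => k ≠ a ∧ k ≠ b), f k = ∑ k, f k - f a - f b := by
  have hset : univ.filter (fun k => k ≠ a ∧ k ≠ b) = univ \ {a, b} := by
    ext k
    simp [not_or]
  rw [hset, sum_sdiff_eq_sub (subset_univ _), sum_pair hab, sub_add_eq_sub_sub]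

theorem inv_pow_succ_mul_inv_sub {K : Type*} [Field K] {m k : K} (hm : m ≠ 0) (hk : k ≠ 0)
    (hkm : k ≠ m) (n : ℕ) :
    (k ^ (n + 1))⁻¹ * (m - k)⁻¹ = m⁻¹ * ((k ^ (n + 1))⁻¹ + (k ^ n)⁻¹ * (m - k)⁻¹) := by
  have hmk : m - k ≠ 0 := sub_ne_zero.2 hkm.symm
  field_simp
  ring

namespace FiniteField

variable {K : Type*} [Field K] [Fintype K]

theorem sum_inv_pow_eq_zero {j : ℕ} (hj : j < Fintype.card K - 1) : ∑ x : K, (x ^ j)⁻¹ = 0 := by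
  simp_rw [← inv_pow]
  rw [Fintype.sum_equiv (Equiv.inv K) (fun x => x⁻¹ ^ j) (· ^ j) fun _ => rfl]
  exact sum_pow_lt_card_sub_one K j hj

variable [DecidableEq K]

theorem sum_filter_inv_pow {j : ℕ} (hj0 : j ≠ 0) (hj : j < Fintype.card K - 1) {m : K}
    (hm : m ≠ 0) :
    ∑ k ∈ univ.filter (fun k : K => k ≠ 0 ∧ k ≠ m), (k ^ j)⁻¹ = -(m ^ j)⁻¹ := by
  rw [sum_filter_ne_and_ne hm.symm, sum_inv_pow_eq_zero hj, zero_pow hj0, inv_zero]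
  abel

theorem sum_filter_inv_sub (hK : 2 < Fintype.card K) {m : K} (hm : m ≠ 0) :
    ∑ k ∈ univ.filter (fun k : K => k ≠ 0 ∧ k ≠ m), (m - k)⁻¹ = -m⁻¹ := by
  have hsum : ∑ k : K, (m - k)⁻¹ = 0 := by
    rw [Fintype.sum_equiv (Equiv.subLeft m) (fun k => (m - k)⁻¹) (·⁻¹) fun _ => rfl]
    simpa using sum_inv_pow_eq_zero (K := K) (j := 1) (by omega)
  rw [sum_filter_ne_and_ne hm.symm, hsum, sub_zero, sub_self, inv_zero]
  abel

theorem sum_filter_inv_pow_mul_inv_sub {n : ℕ} (hn : n + 2 < Fintype.card K) {m : K}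
    (hm : m ≠ 0) :
    ∑ k ∈ univ.filter (fun k : K => k ≠ 0 ∧ k ≠ m), (k ^ n)⁻¹ * (m - k)⁻¹
      = -(n + 1) / m ^ (n + 1) := by
  induction n with
  | zero =>
    simp only [pow_zero, inv_one, one_mul, sum_filter_inv_sub (by omega) hm]
    simp [neg_div]
  | succ n ih =>
    rw [sum_congr rfl fun k hk => inv_pow_succ_mul_inv_sub hm (mem_filter.1 hk).2.1
        (mem_filter.1 hk).2.2 n, ← mul_sum, sum_add_distrib,
      sum_filter_inv_pow n.add_one_ne_zero (by omega) hm, ih (by omega)]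
    field_simp
    push_cast
    ring

end FiniteField

theorem sum_inv_pow_mul_inv_sub_general (p : ℕ) [Fact p.Prime] (i : ℕ)
    (hi1 : 1 ≤ i) (hi2 : i ≤ p - 3) (m : ZMod p) (hm : m ≠ 0) :
    ∑ k ∈ Finset.univ.filter (fun k : ZMod p => k ≠ 0 ∧ k ≠ m),
      (k ^ i)⁻¹ * (m - k)⁻¹ = -(i + 1) / m ^ (i + 1) :=
  FiniteField.sum_filter_inv_pow_mul_inv_sub (by rw [ZMod.card]; omega) hm

theorem sum_inv_pow_mul_inv_sub (p : ℕ) [Fact p.Prime] (hodd : Odd p) (i : ℕ)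
    (hi1 : 1 ≤ i) (hi2 : i ≤ p - 3) (m : ZMod p) (hm : m ≠ 0) :
    ∑ k ∈ Finset.univ.filter (fun k : ZMod p => k ≠ 0 ∧ k ≠ m),
      (k ^ i)⁻¹ * (m - k)⁻¹ = -(i + 1) / m ^ (i + 1) :=
  sum_inv_pow_mul_inv_sub_general p i hi1 hi2 m hm
end

section
/- Let p be a prime, G a solvable transitive subgroup of the symmetric group S_p. Then G contains a unique subgroup of order p, and this subgroup is normal in G. -/
/-!
The last nontrivial term `N` of the derived series of `G` is an abelian normal subgroup. A
transitive action of prime degree is primitive, so `N` is transitive, and a faithful transitive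
abelian group acts regularly: `|N| = p`. Since `p ^ 2 ∤ p !`, `N` is a normal Sylow `p`-subgroup
of `G`, hence the only subgroup of order `p`.
-/

theorem Group.IsSolvable.exists_normal_isMulCommutative_ne_bot (G : Type*) [Group G]
    [Group.IsSolvable G] [Nontrivial G] :
    ∃ N : Subgroup G, N.Normal ∧ IsMulCommutative N ∧ N ≠ ⊥ := by
  obtain ⟨n, hn⟩ := Group.IsSolvable.solvable (G := G)
  induction n with
  | zero => exact absurd hn (by simp)
  | succ n ih =>
    by_cases h : derivedSeries G n = ⊥
    · exact ih h
    · exact ⟨_, derivedSeries_normal G n, Subgroup.commutator_self_eq_bot_iff.mp hn, h⟩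

namespace MulAction

variable {G X : Type*} [Group G] [MulAction G X]

theorem nontrivial_of_isPretransitive [IsPretransitive G X] [Nontrivial X] : Nontrivial G := by
  obtain ⟨x, y, hxy⟩ := exists_pair_ne X
  obtain ⟨g, hg⟩ := exists_smul_eq G x y
  exact ⟨⟨g, 1, by rintro rfl; exact hxy (by simpa using hg)⟩⟩

theorem fixedPoints_ne_univ_of_ne_bot [FaithfulSMul G X] {N : Subgroup G} (hN : N ≠ ⊥) :
    fixedPoints N X ≠ Set.univ := by
  contrapose! hN
  refine (Subgroup.eq_bot_iff_forall N).mpr fun g hg ↦ eq_of_smul_eq_smul (α := X) fun x ↦ ?_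
  have hx : x ∈ fixedPoints N X := hN ▸ Set.mem_univ x
  simpa using hx ⟨g, hg⟩

theorem stabilizer_eq_bot_of_isMulCommutative [IsMulCommutative G] [FaithfulSMul G X]
    [IsPretransitive G X] (a : X) : stabilizer G a = ⊥ := by
  refine (Subgroup.eq_bot_iff_forall _).mpr fun g hg ↦ eq_of_smul_eq_smul (α := X) fun x ↦ ?_
  obtain ⟨h, rfl⟩ := exists_smul_eq G a x
  rw [smul_smul, mul_comm' g h, mul_smul, mem_stabilizer_iff.mp hg, one_smul]

theorem card_eq_of_isMulCommutative [IsMulCommutative G] [FaithfulSMul G X]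
    [IsPretransitive G X] (a : X) : Nat.card G = Nat.card X := by
  rw [← index_stabilizer_of_transitive G a, stabilizer_eq_bot_of_isMulCommutative,
    Subgroup.index_bot]

end MulAction

theorem Nat.Prime.not_sq_dvd_factorial {p : ℕ} (hp : p.Prime) : ¬ p ^ 2 ∣ p.factorial := by
  rw [← Nat.mul_factorial_pred hp.ne_zero, pow_two, Nat.mul_dvd_mul_iff_left hp.pos,
    hp.dvd_factorial]
  have := hp.two_le
  omega

theorem Nat.factorization_eq_one_of_dvd_of_not_sq_dvd {p n : ℕ} (hp : p.Prime) (hn : n ≠ 0)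
    (hdvd : p ∣ n) (hsq : ¬ p ^ 2 ∣ n) : n.factorization p = 1 := by
  rw [← pow_one p, hp.pow_dvd_iff_le_factorization hn] at hdvd
  rw [hp.pow_dvd_iff_le_factorization hn] at hsq
  omega

theorem Subgroup.eq_of_card_eq_prime_of_not_sq_dvd {G : Type*} [Group G] [Finite G] {p : ℕ}
    [hp : Fact p.Prime] (hsq : ¬ p ^ 2 ∣ Nat.card G) {N P : Subgroup G} [hN : N.Normal]
    (hNp : Nat.card N = p) (hPp : Nat.card P = p) : P = N := by
  have hfact : (Nat.card G).factorization p = 1 :=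
    Nat.factorization_eq_one_of_dvd_of_not_sq_dvd hp.out Nat.card_pos.ne'
      (hNp ▸ N.card_subgroup_dvd_card) hsq
  let SN := Sylow.ofCard N (by rw [hfact, pow_one, hNp])
  let SP := Sylow.ofCard P (by rw [hfact, pow_one, hPp])
  have := Sylow.unique_of_normal SN hN
  exact congrArg Sylow.toSubgroup (Subsingleton.elim SP SN)

open MulAction in
theorem solvable_transitive_unique_normal_p_subgroup (p : ℕ) (hp : p.Prime)
    (G : Subgroup (Equiv.Perm (Fin p))) (hsolv : IsSolvable G)
    (htrans : MulAction.IsPretransitive G (Fin p)) :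
    (∃! P : Subgroup G, Nat.card P = p) ∧
      ∀ P : Subgroup G, Nat.card P = p → P.Normal := by
  have : Fact p.Prime := ⟨hp⟩
  have : Group.IsSolvable G := hsolv
  have := htrans
  have : Nontrivial (Fin p) := Fin.nontrivial_iff_two_le.mpr hp.two_le
  have : Nontrivial G := nontrivial_of_isPretransitive (X := Fin p)
  have : IsPreprimitive G (Fin p) := .of_prime_card (by simpa using hp)
  obtain ⟨N, hN, hNcomm, hNbot⟩ := Group.IsSolvable.exists_normal_isMulCommutative_ne_bot G
  have : IsPretransitive N (Fin p) :=
    IsQuasiPreprimitive.isPretransitive_of_normal (fixedPoints_ne_univ_of_ne_bot hNbot)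
  have hNcard : Nat.card N = p := by
    rw [card_eq_of_isMulCommutative (0 : Fin p), Nat.card_fin]
  have hsq : ¬ p ^ 2 ∣ Nat.card G := fun h ↦ hp.not_sq_dvd_factorial <| by
    simpa [Fintype.card_perm] using h.trans G.card_subgroup_dvd_card
  have huniq (P : Subgroup G) (hP : Nat.card P = p) : P = N :=
    Subgroup.eq_of_card_eq_prime_of_not_sq_dvd hsq hNcard hP
  exact ⟨⟨N, hNcard, huniq⟩, fun P hP ↦ huniq P hP ▸ hN⟩
end

section
/- Let p be a prime, G a solvable transitive subgroup of S_p, and P its unique subgroup of order p. Then the quotient N_G(P)/P embeds into a cyclic group of order p-1; in particular G/P is cyclic of order dividing p-1. -/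
/-!
A generator of `P` has order `p` in `S_p`, so it is a `p`-cycle, and the centralizer of a
`p`-cycle in `S_p` is the cyclic group it generates. Hence `P` is self-centralizing in `G`, and
conjugation embeds `G ⧸ P = G ⧸ C_G(P)` into `Aut P ≃ (ZMod p)ˣ`, a cyclic group of order `p - 1`.
-/

open Equiv Subgroup

namespace Equiv.Perm

variable {α : Type*} [Fintype α] [DecidableEq α]

theorem support_eq_univ_of_orderOf_eq_card {σ : Perm α} (hα : (Fintype.card α).Prime)
    (hσ : orderOf σ = Fintype.card α) : σ.support = Finset.univ := by
  have hcycle : σ.IsCycle := isCycle_of_prime_order'' hα hσ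
  apply Finset.eq_univ_of_card
  rw [← hcycle.orderOf, hσ]

theorem IsCycle.centralizer_eq_zpowers {c : Perm α} (hc : c.IsCycle)
    (hsupp : c.support = Finset.univ) : centralizer {c} = zpowers c := by
  refine le_antisymm (fun g hg => ?_) (zpowers_le.mpr (mem_centralizer_singleton_iff.mpr rfl))
  obtain ⟨hg_supp, hg_pow⟩ := hc.commute_iff.mp (mem_centralizer_singleton_iff.mp hg)
  rwa [ofSubtype_subtypePerm hg_supp (fun x _ => hsupp ▸ Finset.mem_univ x)] at hg_pow

theorem centralizer_eq_zpowers_of_orderOf_eq_card {σ : Perm α} (hα : (Fintype.card α).Prime)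
    (hσ : orderOf σ = Fintype.card α) : centralizer {σ} = zpowers σ :=
  (isCycle_of_prime_order'' hα hσ).centralizer_eq_zpowers (support_eq_univ_of_orderOf_eq_card hα hσ)

theorem centralizer_le_of_card_eq_card {G : Subgroup (Perm α)} {P : Subgroup G}
    (hα : (Fintype.card α).Prime) (hP : Nat.card P = Fintype.card α) :
    centralizer (P : Set G) ≤ P := by
  have : Fact (Fintype.card α).Prime := ⟨hα⟩
  obtain ⟨σ, hσ⟩ := (isCyclic_of_prime_card hP).exists_generator
  have hσ_order : orderOf ((σ : G) : Perm α) = Fintype.card α := by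
    rw [Subgroup.orderOf_coe, Subgroup.orderOf_coe, orderOf_eq_card_of_forall_mem_zpowers hσ, hP]
  intro g hg
  have hcomm : (g : Perm α) ∈ centralizer {((σ : G) : Perm α)} := by
    rw [mem_centralizer_singleton_iff]
    exact congrArg Subtype.val (hg σ σ.2).symm
  rw [centralizer_eq_zpowers_of_orderOf_eq_card hα hσ_order] at hcomm
  obtain ⟨k, hk⟩ := hcomm
  have : g = (σ : G) ^ k := Subtype.ext (by simpa using hk.symm)
  exact this ▸ P.zpow_mem σ.2 k

end Equiv.Perm

theorem MulAut.ker_conjNormal {G : Type*} [Group G] (H : Subgroup G) [H.Normal] :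
    (MulAut.conjNormal : G →* MulAut H).ker = centralizer H := by
  ext g
  simp only [MonoidHom.mem_ker, mem_centralizer_iff, MulEquiv.ext_iff, MulAut.one_apply,
    Subtype.ext_iff, MulAut.conjNormal_apply, SetLike.mem_coe]
  constructor
  · intro h x hx
    rw [eq_comm, ← mul_inv_eq_iff_eq_mul, h ⟨x, hx⟩]
  · intro h x
    rw [mul_inv_eq_iff_eq_mul, h x x.2]

theorem exists_injective_quotient_units_of_centralizer_le {G : Type*} [Group G] {H : Subgroup G}
    [H.Normal] [IsCyclic H] {n : ℕ} (hn : Nat.card H = n) (hH : centralizer (H : Set G) ≤ H) :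
    ∃ f : G ⧸ H →* (ZMod n)ˣ, Function.Injective f := by
  subst hn
  have hker : (MulAut.conjNormal : G →* MulAut H).ker = H :=
    (MulAut.ker_conjNormal H).trans (le_antisymm hH (le_centralizer H))
  let e := QuotientGroup.quotientMulEquivOfEq hker.symm
  refine ⟨(IsCyclic.mulAutMulEquiv H).toMonoidHom.comp
      ((QuotientGroup.kerLift MulAut.conjNormal).comp e.toMonoidHom), ?_⟩
  simp only [MonoidHom.coe_comp, MulEquiv.coe_toMonoidHom]
  exact (IsCyclic.mulAutMulEquiv H).injective.comp
      ((QuotientGroup.kerLift_injective MulAut.conjNormal).comp e.injective)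

theorem solvable_transitive_quotient_cyclic_general (p : ℕ) [Fact p.Prime]
    (G : Subgroup (Equiv.Perm (Fin p)))
    (P : Subgroup G) [hP : P.Normal] (hcard : Nat.card P = p) :
    (∃ f : G ⧸ P →* (ZMod p)ˣ, Function.Injective f) ∧
      IsCyclic (G ⧸ P) ∧ Nat.card (G ⧸ P) ∣ (p - 1) := by
  have hdeg : Nat.card P = Fintype.card (Fin p) := hcard.trans (Fintype.card_fin p).symm
  have : IsCyclic P := isCyclic_of_prime_card hcard
  obtain ⟨f, hf⟩ := exists_injective_quotient_units_of_centralizer_le hcard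
    (Perm.centralizer_le_of_card_eq_card (by simpa using Fact.out) hdeg)
  refine ⟨⟨f, hf⟩, isCyclic_of_injective f hf, ?_⟩
  simpa [Nat.card_units, Nat.totient_prime Fact.out] using Subgroup.card_dvd_of_injective f hf

theorem solvable_transitive_quotient_cyclic (p : ℕ) [Fact p.Prime]
    (G : Subgroup (Equiv.Perm (Fin p))) (hsolv : IsSolvable G)
    (htrans : MulAction.IsPretransitive G (Fin p))
    (P : Subgroup G) [hP : P.Normal] (hcard : Nat.card P = p) :
    (∃ f : G ⧸ P →* (ZMod p)ˣ, Function.Injective f) ∧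
      IsCyclic (G ⧸ P) ∧ Nat.card (G ⧸ P) ∣ (p - 1) :=
  solvable_transitive_quotient_cyclic_general p G P (hP := hP) hcard
end
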